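/- Under the 4NAT test distribution, for every i ∈ [K] and j ∈ [L] with π(j) ≠ i, one has Pr[4NAT(x_i, y_j, z_j, w_j) = 1] = 2/3. (In particular, nonmatching dictator assignments pass the 4NAT test with probability exactly 2/3.) -/
import Mathlib

open Finset

/-- The 4-Not-All-There predicate: some element of `ZMod 3` does not occur
among the four inputs. -/
def fourNAT (a : Fin 4 → ZMod 3) : Prop := ∃ c : ZMod 3, ∀ i, a i ≠ c

/-- The TwoPair predicate: the four inputs take exactly two distinct values,
each occurring exactly twice. -/
def TwoPair (a : Fin 4 → ZMod 3) : Prop :=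
  ∃ b c : ZMod 3, b ≠ c ∧
    (univ.filter fun i => a i = b).card = 2 ∧
    (univ.filter fun i => a i = c).card = 2

open Classical in
noncomputable def natTestPr (d K : ℕ)
    (E : (Fin K → ZMod 3) → ((Fin K × Fin d) → ZMod 3) →
         ((Fin K × Fin d) → ZMod 3) → ((Fin K × Fin d) → ZMod 3) → Prop) : ℝ :=
  (∑ x : Fin K → ZMod 3, ∑ y : (Fin K × Fin d) → ZMod 3,
    ∑ z : (Fin K × Fin d) → ZMod 3, ∑ w : (Fin K × Fin d) → ZMod 3,
      (if (∀ j : Fin K × Fin d, TwoPair ![x j.1, y j, z j, w j]) ∧ E x y z w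
       then 1 else 0))
    / (3 ^ K * 6 ^ (d * K))

/- ### auxiliary machinery -/

instance : DecidablePred fourNAT := fun a => by unfold fourNAT; infer_instance
instance : DecidablePred TwoPair := fun a => by unfold TwoPair; infer_instance

open Classical in
noncomputable def ind (P : Prop) : ℝ := if P then 1 else 0

lemma ind_def (P : Prop) (h : Decidable P) : @ite ℝ P h 1 0 = ind P := by
  unfold ind
  cases h with
  | isTrue hp => rw [if_pos hp, if_pos hp]
  | isFalse hp => rw [if_neg hp, if_neg hp]

lemma ind_true {P : Prop} (h : P) : ind P = 1 := if_pos h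
lemma ind_false {P : Prop} (h : ¬P) : ind P = 0 := if_neg h

lemma ind_and (P Q : Prop) : ind (P ∧ Q) = ind P * ind Q := by
  by_cases hP : P <;> by_cases hQ : Q
  · rw [ind_true ⟨hP, hQ⟩, ind_true hP, ind_true hQ]; ring
  · rw [ind_false (fun h => hQ h.2), ind_false hQ]; ring
  · rw [ind_false (fun h => hP h.1), ind_false hP]; ring
  · rw [ind_false (fun h => hP h.1), ind_false hP]; ring

lemma ind_forall {J : Type*} [Fintype J] (P : J → Prop) :
    ind (∀ j, P j) = ∏ j, ind (P j) := by
  by_cases h : ∀ j, P j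
  · rw [ind_true h, eq_comm]
    exact Finset.prod_eq_one fun j _ => ind_true (h j)
  · rw [ind_false h, eq_comm]
    push_neg at h
    obtain ⟨j, hj⟩ := h
    exact Finset.prod_eq_zero (mem_univ j) (ind_false hj)

lemma ind_cast (P : Prop) [h : Decidable P] : ind P = ((if P then 1 else 0 : ℕ) : ℝ) := by
  cases h with
  | isTrue hp => rw [ind_true hp, if_pos hp]; norm_num
  | isFalse hp => rw [ind_false hp, if_neg hp]; norm_num

lemma sum_ind_eq (a : ZMod 3) : (∑ v : ZMod 3, ind (v = a)) = 1 := by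
  rw [Finset.sum_eq_single a (fun v _ hv => ind_false hv)
    (fun h => absurd (mem_univ a) h)]
  exact ind_true rfl

lemma sum_fn {J : Type*} [Fintype J] [DecidableEq J] {α : Type*} [Fintype α] [DecidableEq α]
    (F : J → α → ℝ) : ∑ y : J → α, ∏ j, F j (y j) = ∏ j, ∑ p, F j p := by
  rw [Finset.prod_univ_sum, Fintype.piFinset_univ]

lemma sum_fn3 {J : Type*} [Fintype J] [DecidableEq J] {α : Type*} [Fintype α] [DecidableEq α]
    (F : J → α → α → α → ℝ) :
    (∑ y : J → α, ∑ z : J → α, ∑ w : J → α, ∏ j, F j (y j) (z j) (w j))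
      = ∏ j, ∑ p, ∑ q, ∑ r, F j p q r := by
  have h1 : ∀ y z : J → α, (∑ w : J → α, ∏ j, F j (y j) (z j) (w j))
      = ∏ j, ∑ r, F j (y j) (z j) r := fun y z => sum_fn (fun j r => F j (y j) (z j) r)
  simp only [h1]
  have h2 : ∀ y : J → α, (∑ z : J → α, ∏ j, ∑ r, F j (y j) (z j) r)
      = ∏ j, ∑ q, ∑ r, F j (y j) q r := fun y => sum_fn (fun j q => ∑ r, F j (y j) q r)
  simp only [h2]
  exact sum_fn (fun j p => ∑ q, ∑ r, F j p q r)

/-- per-coordinate factor -/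
noncomputable def Fx (d K : ℕ) (i : Fin K) (j : Fin K × Fin d) (x : Fin K → ZMod 3)
    (jj : Fin K × Fin d) (p q r : ZMod 3) : ℝ :=
  ind (TwoPair ![x jj.1, p, q, r]) *
    (if jj = j then ind (fourNAT ![x i, p, q, r]) else 1)

/-- joint count at the special coordinate -/
noncomputable def Nab (a b : ZMod 3) : ℝ :=
  ∑ p : ZMod 3, ∑ q : ZMod 3, ∑ r : ZMod 3,
    ind (TwoPair ![b, p, q, r]) * ind (fourNAT ![a, p, q, r])

noncomputable def Gk {K : ℕ} (i m : Fin K) (a b : ZMod 3) (k : Fin K) (v : ZMod 3) : ℝ :=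
  if k = i then ind (v = a) else if k = m then ind (v = b) else 1

lemma countTP : ∀ b : ZMod 3,
    (∑ p : ZMod 3, ∑ q : ZMod 3, ∑ r : ZMod 3,
      if TwoPair ![b, p, q, r] then (1 : ℕ) else 0) = 6 := by decide

lemma countN :
    (∑ a : ZMod 3, ∑ b : ZMod 3, ∑ p : ZMod 3, ∑ q : ZMod 3, ∑ r : ZMod 3,
      if TwoPair ![b, p, q, r] ∧ fourNAT ![a, p, q, r] then (1 : ℕ) else 0) = 36 := by
  decide

lemma countTP_R (b : ZMod 3) :
    (∑ p : ZMod 3, ∑ q : ZMod 3, ∑ r : ZMod 3, ind (TwoPair ![b, p, q, r])) = 6 := by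
  simp only [ind_cast]
  norm_cast
  exact countTP b

lemma countN_R : (∑ a : ZMod 3, ∑ b : ZMod 3, Nab a b) = 36 := by
  simp only [Nab, ← ind_and, ind_cast]
  norm_cast

theorem nonmatching_dictators_pass (d K : ℕ) (hd : 0 < d) (hK : 0 < K)
    (i : Fin K) (j : Fin K × Fin d) (hij : j.1 ≠ i) :
    natTestPr d K (fun x y z w => fourNAT ![x i, y j, z j, w j]) = 2 / 3 := by
  simp only [natTestPr, ind_def, ind_and, ind_forall]
  have hsplit : ∀ (x : Fin K → ZMod 3) (y z w : (Fin K × Fin d) → ZMod 3),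
      (∏ jj, ind (TwoPair ![x jj.1, y jj, z jj, w jj])) *
          ind (fourNAT ![x i, y j, z j, w j])
        = ∏ jj, Fx d K i j x jj (y jj) (z jj) (w jj) := by
    intro x y z w
    unfold Fx
    rw [Finset.prod_mul_distrib]
    congr 1
    rw [Finset.prod_ite_eq' univ j (fun jj => ind (fourNAT ![x i, y jj, z jj, w jj])),
      if_pos (mem_univ j)]
  simp only [hsplit]
  simp only [sum_fn3]
  have hprod : ∀ x : Fin K → ZMod 3,
      (∏ jj : Fin K × Fin d, ∑ p : ZMod 3, ∑ q : ZMod 3, ∑ r : ZMod 3,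
          Fx d K i j x jj p q r)
        = Nab (x i) (x j.1) * 6 ^ (K * d - 1) := by
    intro x
    rw [← Finset.mul_prod_erase univ _ (Finset.mem_univ j)]
    have h0 : (∑ p : ZMod 3, ∑ q : ZMod 3, ∑ r : ZMod 3, Fx d K i j x j p q r)
        = Nab (x i) (x j.1) := by
      have hF : ∀ p q r : ZMod 3, Fx d K i j x j p q r
          = ind (TwoPair ![x j.1, p, q, r]) * ind (fourNAT ![x i, p, q, r]) := by
        intro p q r; unfold Fx; rw [if_pos rfl]
      simp only [hF, Nab]
    have h1 : ∀ jj ∈ univ.erase j,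
        (∑ p : ZMod 3, ∑ q : ZMod 3, ∑ r : ZMod 3, Fx d K i j x jj p q r) = 6 := by
      intro jj hjj
      have hne : jj ≠ j := (Finset.mem_erase.mp hjj).1
      have hF : ∀ p q r : ZMod 3, Fx d K i j x jj p q r
          = ind (TwoPair ![x jj.1, p, q, r]) := by
        intro p q r; unfold Fx; rw [if_neg hne, mul_one]
      simp only [hF]
      exact countTP_R (x jj.1)
    rw [h0, Finset.prod_congr rfl h1, Finset.prod_const,
      Finset.card_erase_of_mem (Finset.mem_univ j), Finset.card_univ,
      Fintype.card_prod, Fintype.card_fin, Fintype.card_fin]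
  simp only [hprod]
  rw [← Finset.sum_mul]
  have hcount : ∀ a b : ZMod 3,
      (∑ x : Fin K → ZMod 3, ind (x i = a) * ind (x j.1 = b)) = 3 ^ (K - 2) := by
    intro a b
    have h1 : ∀ x : Fin K → ZMod 3,
        ind (x i = a) * ind (x j.1 = b) = ∏ k, Gk i j.1 a b k (x k) := by
      intro x
      have hGi : Gk i j.1 a b i (x i) = ind (x i = a) := by
        unfold Gk; rw [if_pos rfl]
      have hGj : Gk i j.1 a b j.1 (x j.1) = ind (x j.1 = b) := by
        unfold Gk; rw [if_neg hij, if_pos rfl]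
      have hrest : (∏ k ∈ (univ.erase i).erase j.1, Gk i j.1 a b k (x k)) = 1 := by
        refine Finset.prod_eq_one fun k hk => ?_
        have h' := Finset.mem_erase.mp hk
        have h'' := Finset.mem_erase.mp h'.2
        unfold Gk; rw [if_neg h''.1, if_neg h'.1]
      rw [← Finset.mul_prod_erase univ _ (Finset.mem_univ i),
        ← Finset.mul_prod_erase _ _
          (Finset.mem_erase.mpr ⟨hij, Finset.mem_univ j.1⟩),
        hGi, hGj, hrest, mul_one]
    simp only [h1]
    rw [_root_.sum_fn]
    have si : (∑ v : ZMod 3, Gk i j.1 a b i v) = 1 := by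
      have h : ∀ v : ZMod 3, Gk i j.1 a b i v = ind (v = a) := fun v => if_pos rfl
      rw [show (∑ v : ZMod 3, Gk i j.1 a b i v) = ∑ v : ZMod 3, ind (v = a) from
        Finset.sum_congr rfl fun v _ => h v, sum_ind_eq]
    have sj : (∑ v : ZMod 3, Gk i j.1 a b j.1 v) = 1 := by
      have h : ∀ v : ZMod 3, Gk i j.1 a b j.1 v = ind (v = b) := by
        intro v; unfold Gk; rw [if_neg hij, if_pos rfl]
      rw [show (∑ v : ZMod 3, Gk i j.1 a b j.1 v) = ∑ v : ZMod 3, ind (v = b) from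
        Finset.sum_congr rfl fun v _ => h v, sum_ind_eq]
    have srest : (∏ k ∈ (univ.erase i).erase j.1, ∑ v : ZMod 3, Gk i j.1 a b k v)
        = 3 ^ (K - 2) := by
      have hc : ∀ k ∈ (univ.erase i).erase j.1,
          (∑ v : ZMod 3, Gk i j.1 a b k v) = 3 := by
        intro k hk
        have h' := Finset.mem_erase.mp hk
        have h'' := Finset.mem_erase.mp h'.2
        have h : ∀ v : ZMod 3, Gk i j.1 a b k v = 1 := by
          intro v; unfold Gk; rw [if_neg h''.1, if_neg h'.1]
        rw [show (∑ v : ZMod 3, Gk i j.1 a b k v) = ∑ _v : ZMod 3, (1:ℝ) from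
          Finset.sum_congr rfl fun v _ => h v]
        simp
      rw [Finset.prod_congr rfl hc, Finset.prod_const]
      congr 1
      rw [Finset.card_erase_of_mem
          (Finset.mem_erase.mpr ⟨hij, Finset.mem_univ j.1⟩),
        Finset.card_erase_of_mem (Finset.mem_univ i), Finset.card_univ,
        Fintype.card_fin]
      omega
    rw [← Finset.mul_prod_erase univ _ (Finset.mem_univ i),
      ← Finset.mul_prod_erase _ _
        (Finset.mem_erase.mpr ⟨hij, Finset.mem_univ j.1⟩),
      si, sj, srest]
    norm_num
  have hx : ∀ x : Fin K → ZMod 3,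
      Nab (x i) (x j.1) = ∑ a : ZMod 3, ∑ b : ZMod 3,
        ind (x i = a) * ind (x j.1 = b) * Nab a b := by
    intro x
    symm
    rw [Finset.sum_eq_single (x i)]
    · rw [Finset.sum_eq_single (x j.1)]
      · rw [ind_true rfl, ind_true rfl]; ring
      · intro b _ hb
        rw [show ind (x j.1 = b) = 0 from ind_false (fun h => hb h.symm)]; ring
      · intro h; exact absurd (mem_univ _) h
    · intro a _ ha
      refine Finset.sum_eq_zero fun b _ => ?_
      rw [show ind (x i = a) = 0 from ind_false (fun h => ha h.symm)]; ring
    · intro h; exact absurd (mem_univ _) h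
  have hsum : (∑ x : Fin K → ZMod 3, Nab (x i) (x j.1)) = 3 ^ (K - 2) * 36 := by
    simp only [hx]
    rw [Finset.sum_comm]
    have hswap : ∀ a : ZMod 3,
        (∑ x : Fin K → ZMod 3, ∑ b : ZMod 3,
            ind (x i = a) * ind (x j.1 = b) * Nab a b)
          = ∑ b : ZMod 3, (∑ x : Fin K → ZMod 3,
              ind (x i = a) * ind (x j.1 = b)) * Nab a b := by
      intro a
      rw [Finset.sum_comm]
      exact Finset.sum_congr rfl fun b _ => (Finset.sum_mul _ _ _).symm
    simp only [hswap, hcount]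
    simp only [← Finset.mul_sum]
    rw [countN_R]
  rw [hsum]
  have hK2 : 2 ≤ K := by
    have h1 := i.isLt
    have h2 := j.1.isLt
    have h3 : (j.1 : ℕ) ≠ (i : ℕ) := fun h => hij (Fin.ext h)
    omega
  have hdK : 1 ≤ K * d := Nat.mul_pos hK hd
  have hc : d * K = K * d := Nat.mul_comm d K
  have e3 : (3 : ℝ) ^ K = 3 ^ (K - 2) * 9 := by
    conv_lhs => rw [show K = K - 2 + 2 by omega]
    rw [pow_add]; norm_num
  have e6 : (6 : ℝ) ^ (d * K) = 6 ^ (K * d - 1) * 6 := by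
    conv_lhs => rw [show d * K = K * d - 1 + 1 by omega]
    rw [pow_add]; norm_num
  rw [e3, e6]
  rw [div_eq_iff (by positivity)]
  ring
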